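/- Let N be even, let t_min < t_max be reals, and let C_N(t) = (t, t^2, ..., t^N). Every point in the convex hull of the image of C_N over [t_min, t_max] can be written as a convex combination of at most (N+2)/2 points on the curve, one of which may be required to be C_N(t_min). -/

import Mathlib

/-!
The convex hull `K` of the curve `C = C_N` is compact. If `v ≠ C t_min`, follow the ray from
`C t_min` through `v` to the point `y` where it leaves `K`: then `v` lies on the segment from
`C t_min` to `y`, and `K` has a supporting hyperplane `g ≤ g y` at `y`. The curve meets this
hyperplane exactly at the roots in `[t_min, t_max]` of `g y - g (C t)`, a nonzero polynomial of
degree `≤ N = 2m` which is nonnegative on `[t_min, t_max]`, and `y` is a convex combination of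
these curve points. Roots in the open interval are at least double, so apart from `t_min` there
are at most `m` of them.
-/

open Set Finset Polynomial Filter Topology Function

theorem Function.Embedding.sum_extend_zero {ι κ M : Type*} [Fintype ι] [Fintype κ]
    [AddCommMonoid M] (e : ι ↪ κ) (f : ι → M) : ∑ k, extend e f 0 k = ∑ i, f i :=
  (Fintype.sum_of_injective e e.injective f _ (fun k hk => extend_apply' f (0 : κ → M) k hk)
    fun _ => (e.injective.extend_apply _ _ _).symm).symm

section Reindex

variable {α E : Type*} [AddCommGroup E] [Module ℝ E]

theorem exists_weights_of_mem_convexHull_image (φ : α → E) (T : Finset α) {v : E}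
    (hv : v ∈ convexHull ℝ (φ '' T)) :
    ∃ w : α → ℝ, (∀ x ∈ T, 0 ≤ w x) ∧ ∑ x ∈ T, w x = 1 ∧ ∑ x ∈ T, w x • φ x = v := by
  classical
  refine convexHull_min (t := {u | ∃ w : α → ℝ, (∀ x ∈ T, 0 ≤ w x) ∧ ∑ x ∈ T, w x = 1 ∧
    ∑ x ∈ T, w x • φ x = u}) ?_ ?_ hv
  · rintro _ ⟨x, hx, rfl⟩
    rw [Finset.mem_coe] at hx
    exact ⟨fun y => if y = x then 1 else 0, fun y _ => by positivity, by simp [hx],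
      by simp [ite_smul, hx]⟩
  · rintro _ ⟨w₁, hw₁, hs₁, rfl⟩ _ ⟨w₂, hw₂, hs₂, rfl⟩ a b ha hb hab
    refine ⟨a • w₁ + b • w₂, fun x hx => ?_, ?_, ?_⟩
    · exact add_nonneg (mul_nonneg ha (hw₁ x hx)) (mul_nonneg hb (hw₂ x hx))
    · simp [Finset.sum_add_distrib, ← Finset.mul_sum, hs₁, hs₂, hab]
    · simp [add_smul, mul_smul, Finset.sum_add_distrib, Finset.smul_sum]

theorem exists_fin_sum_smul_eq_of_mem_convexHull_image (φ : α → E) {T : Finset α} {a : α}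
    (ha : a ∈ T) {n : ℕ} (hn : 0 < n) (hT : #T ≤ n) {v : E}
    (hv : v ∈ convexHull ℝ (φ '' T)) :
    ∃ c : Fin n → ℝ, ∃ t : Fin n → α, (∀ j, 0 ≤ c j) ∧ ∑ j, c j = 1 ∧ (∀ j, t j ∈ T) ∧
      t ⟨0, hn⟩ = a ∧ ∑ j, c j • φ (t j) = v := by
  obtain ⟨w, hw₀, hw₁, hwv⟩ := exists_weights_of_mem_convexHull_image φ T hv
  obtain ⟨e₀⟩ : Nonempty (T ↪ Fin n) := Function.Embedding.nonempty_of_card_le (by simpa using hT)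
  let e : T ↪ Fin n := e₀.trans (Equiv.swap (e₀ ⟨a, ha⟩) ⟨0, hn⟩).toEmbedding
  have he : e ⟨a, ha⟩ = ⟨0, hn⟩ := Equiv.swap_apply_left _ _
  have hsmul : ∀ j, extend e (fun x => w x) 0 j • φ (extend e Subtype.val (fun _ => a) j) =
      extend e (fun x => w x • φ x) 0 j := by
    intro j
    by_cases h : ∃ x, e x = j
    · obtain ⟨x, rfl⟩ := h
      simp only [e.injective.extend_apply]
    · simp only [extend_apply' _ _ _ h, Pi.zero_apply, zero_smul]
  refine ⟨extend e (fun x => w x) 0, extend e Subtype.val (fun _ => a), fun j => ?_, ?_,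
    fun j => ?_, by rw [← he, e.injective.extend_apply], ?_⟩
  · rw [extend_def]
    split_ifs
    exacts [hw₀ _ (Subtype.prop _), le_rfl]
  · rw [e.sum_extend_zero, Finset.sum_coe_sort T w, hw₁]
  · rw [extend_def]
    split_ifs
    exacts [Subtype.prop _, ha]
  · simp_rw [hsmul, e.sum_extend_zero, Finset.sum_coe_sort T (fun x => w x • φ x), hwv]

end Reindex

theorem isCompact_convexHull {E : Type*} [AddCommGroup E] [Module ℝ E] [TopologicalSpace E]
    [ContinuousAdd E] [ContinuousSMul ℝ E] [FiniteDimensional ℝ E] {s : Set E}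
    (hs : IsCompact s) : IsCompact (convexHull ℝ s) := by
  set n := Module.finrank ℝ E + 1
  -- Carathéodory: `n` points of `s` suffice
  have hhull : convexHull ℝ s = (fun p : (Fin n → ℝ) × (Fin n → E) => ∑ j, p.1 j • p.2 j) ''
      (stdSimplex ℝ (Fin n) ×ˢ univ.pi fun _ => s) := by
    refine Subset.antisymm (fun x hx => ?_) ?_
    · rw [convexHull_eq_union] at hx
      simp only [mem_iUnion] at hx
      obtain ⟨T, hTs, hT, hx⟩ := hx
      have hcard : #T ≤ n := by
        simpa using hT.card_le_finrank_succ.trans (Nat.add_le_add_right (Submodule.finrank_le _) 1)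
      obtain ⟨a, ha⟩ : T.Nonempty := by
        simpa using convexHull_nonempty_iff.1 ⟨x, hx⟩
      obtain ⟨c, t, hc₀, hc₁, ht, -, hx⟩ :=
        exists_fin_sum_smul_eq_of_mem_convexHull_image id ha (by omega) hcard (by rwa [image_id])
      exact ⟨(c, t), ⟨⟨hc₀, hc₁⟩, fun j _ => hTs (ht j)⟩, hx⟩
    · rintro _ ⟨⟨c, t⟩, ⟨⟨hc₀, hc₁⟩, ht⟩, rfl⟩
      exact mem_convexHull_of_exists_fintype c t hc₀ hc₁ (fun j => ht j (mem_univ j)) rfl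
  rw [hhull]
  exact ((isCompact_stdSimplex _ _).prod (isCompact_univ_pi fun _ => hs)).image (by fun_prop)

theorem IsCompact.exists_mem_frontier_mem_segment {E : Type*} [AddCommGroup E] [Module ℝ E]
    [TopologicalSpace E] [T1Space E] [ContinuousAdd E] [ContinuousSMul ℝ E]
    {K : Set E} (hK : IsCompact K) {a v : E} (hv : v ∈ K) (hav : a ≠ v) :
    ∃ y ∈ frontier K, v ∈ segment ℝ a y := by
  -- maximise the weight `l` of `a` over all ways of writing `v = l • a + (1 - l) • y`, `y ∈ K`
  set P := (Icc (0 : ℝ) 1 ×ˢ K) ∩ (fun p : ℝ × E => p.1 • a + (1 - p.1) • p.2) ⁻¹' {v}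
  have hP : IsCompact P :=
    (isCompact_Icc.prod hK).inter_right (isClosed_singleton.preimage (by fun_prop))
  obtain ⟨⟨l, y⟩, ⟨⟨hl, hy⟩, hly⟩, hmax⟩ := hP.exists_isMaxOn
    ⟨(0, v), ⟨left_mem_Icc.2 zero_le_one, hv⟩, by simp⟩ continuous_fst.continuousOn
  have hly : l • a + (1 - l) • y = v := hly
  have hl : l ∈ Icc (0 : ℝ) 1 := hl
  have hl1 : l < 1 := hl.2.lt_of_ne (by rintro rfl; apply hav; simpa using hly)
  have hout : ∀ s > (0 : ℝ), y + s • (y - a) ∉ K := by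
    intro s hs hmem
    have hs1 : 0 < 1 + s := by linarith
    have hmem' : ((l + s) / (1 + s), y + s • (y - a)) ∈ P := by
      refine ⟨⟨⟨div_nonneg (by linarith [hl.1]) hs1.le, (div_le_one hs1).2 (by linarith)⟩,
        hmem⟩, ?_⟩
      simp only [Set.mem_preimage, Set.mem_singleton_iff, ← hly]
      match_scalars <;> field_simp <;> ring
    have : (l + s) / (1 + s) ≤ l := hmax hmem'
    rw [div_le_iff₀ hs1] at this
    nlinarith
  have hray : Tendsto (fun s : ℝ => y + s • (y - a)) (𝓝[>] 0) (𝓝 y) :=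
    ((continuous_const.add (continuous_id.smul continuous_const)).tendsto' 0 y
      (by simp)).mono_left nhdsWithin_le_nhds
  refine ⟨y, ⟨subset_closure hy, fun hint => ?_⟩, ⟨l, 1 - l, hl.1, by linarith, by ring, hly⟩⟩
  obtain ⟨s, hs, hsK⟩ := ((eventually_mem_nhdsWithin (a := 0) (s := Ioi 0)).and
    (hray.eventually (isOpen_interior.mem_nhds hint))).exists
  exact hout s hs (interior_subset hsK)

theorem exists_ne_zero_forall_le_of_mem_frontier {E : Type*} [NormedAddCommGroup E]
    [NormedSpace ℝ E] [FiniteDimensional ℝ E] {K : Set E} (hKc : Convex ℝ K) (hKcl : IsClosed K)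
    {y : E} (hy : y ∈ frontier K) : ∃ g : StrongDual ℝ E, g ≠ 0 ∧ ∀ x ∈ K, g x ≤ g y := by
  obtain ⟨x₀, hx₀⟩ : K.Nonempty := ⟨y, hKcl.frontier_subset hy⟩
  have hyc : y ∈ closure Kᶜ := by
    rw [closure_compl]
    exact hy.2
  obtain ⟨z, hzK, hzy⟩ := mem_closure_iff_seq_limit.1 hyc
  -- separate each `z n` strictly from `K` by a unit functional, then pass to a limit
  have hsep : ∀ n, ∃ f : StrongDual ℝ E, ‖f‖ = 1 ∧ ∀ x ∈ K, f x < f (z n) := by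
    intro n
    obtain ⟨f, u, hfK, hfz⟩ := geometric_hahn_banach_closed_point hKc hKcl (hzK n)
    have hf : f ≠ 0 := by
      rintro rfl
      simpa using (hfK x₀ hx₀).trans hfz
    refine ⟨‖f‖⁻¹ • f, by simp [norm_smul, hf], fun x hx => ?_⟩
    simpa using mul_lt_mul_of_pos_left ((hfK x hx).trans hfz) (inv_pos.2 (norm_pos_iff.2 hf))
  choose f hf1 hfK using hsep
  obtain ⟨g, hg, ψ, hψ, hfg⟩ :=
    (isCompact_sphere (0 : StrongDual ℝ E) 1).tendsto_subseq (x := f) (fun n => by simp [hf1])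
  refine ⟨g, by rintro rfl; simp at hg, fun x hx => ?_⟩
  have hgx : Tendsto (fun n => f (ψ n) x) atTop (𝓝 (g x)) :=
    ((ContinuousLinearMap.apply ℝ ℝ x).continuous.tendsto g).comp hfg
  have hgy : Tendsto (fun n => f (ψ n) (z (ψ n))) atTop (𝓝 (g y)) :=
    ((continuous_fst.clm_apply continuous_snd).tendsto (g, y)).comp
      (hfg.prodMk_nhds (hzy.comp hψ.tendsto_atTop))
  exact le_of_tendsto_of_tendsto' hgx hgy fun n => (hfK (ψ n) x hx).le

theorem mem_convexHull_inter_of_forall_le {E : Type*} [AddCommGroup E] [Module ℝ E] {s : Set E}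
    {f : E →ₗ[ℝ] ℝ} {y : E} (hy : y ∈ convexHull ℝ s) (hf : ∀ x ∈ s, f x ≤ f y) :
    y ∈ convexHull ℝ (s ∩ {x | f x = f y}) := by
  obtain ⟨ι, _, w, z, hw₀, hw₁, hz, hwz⟩ := mem_convexHull_iff_exists_fintype.1 hy
  have hsum : ∑ i, w i * (f y - f (z i)) = 0 := by
    simp [mul_sub, Finset.sum_sub_distrib, ← Finset.sum_mul, hw₁, ← hwz]
  have heq : ∀ i, w i ≠ 0 → f (z i) = f y := fun i hi => by
    have := (Finset.sum_eq_zero_iff_of_nonneg fun j _ =>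
      mul_nonneg (hw₀ j) (sub_nonneg.2 (hf _ (hz j)))).1 hsum i (mem_univ i)
    rcases mul_eq_zero.1 this with h | h
    exacts [absurd h hi, by linarith]
  have hw₁' : ∑ i with w i ≠ 0, w i = 1 := by rw [Finset.sum_filter_ne_zero, hw₁]
  have hwz' : ∑ i with w i ≠ 0, w i • z i = y := by
    rw [Finset.sum_filter_of_ne fun i _ hi => left_ne_zero_of_smul hi, hwz]
  have hmem := Finset.centerMass_mem_convexHull (s := s ∩ {x | f x = f y}) _
    (fun i _ => hw₀ i) (by rw [hw₁']; exact one_pos)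
    fun i hi => ⟨hz i, heq i (Finset.mem_filter.1 hi).2⟩
  rwa [Finset.centerMass_eq_of_sum_1 _ _ hw₁', hwz'] at hmem

namespace Polynomial

theorem sum_rootMultiplicity_le_natDegree {R : Type*} [CommRing R] [IsDomain R] (p : R[X])
    (F : Finset R) : ∑ r ∈ F, p.rootMultiplicity r ≤ p.natDegree := by
  classical
  calc ∑ r ∈ F, p.rootMultiplicity r = ∑ r ∈ F, p.roots.count r := by simp [count_roots]
    _ ≤ ∑ r ∈ p.roots.toFinset, p.roots.count r := Finset.sum_le_sum_of_ne_zero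
        fun r _ hr => Multiset.mem_toFinset.2 (Multiset.count_ne_zero.1 hr)
    _ = Multiset.card p.roots := Multiset.toFinset_sum_count_eq _
    _ ≤ p.natDegree := card_roots' p

theorem one_lt_rootMultiplicity_of_isLocalMin {p : ℝ[X]} {r : ℝ} (hp : p ≠ 0) (hr : p.IsRoot r)
    (hmin : IsLocalMin p.eval r) : 1 < p.rootMultiplicity r :=
  (one_lt_rootMultiplicity_iff_isRoot hp).2
    ⟨hr, by simpa [Polynomial.deriv] using hmin.deriv_eq_zero⟩

theorem card_roots_Ioc_le_of_nonneg {p : ℝ[X]} {a b : ℝ} {m : ℕ} (hp : p ≠ 0)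
    (hdeg : p.natDegree ≤ 2 * m) (hnonneg : ∀ x ∈ Icc a b, 0 ≤ p.eval x) :
    #{x ∈ p.roots.toFinset | x ∈ Ioc a b} ≤ m := by
  set F := {x ∈ p.roots.toFinset | x ∈ Ioc a b}
  -- only the endpoint `b` can be a simple root
  have hmult : ∀ r ∈ F, 2 ≤ p.rootMultiplicity r + if r = b then 1 else 0 := by
    intro r hr
    obtain ⟨hroot, har, hrb⟩ : p.IsRoot r ∧ a < r ∧ r ≤ b := by simpa [F, hp] using hr
    rcases hrb.lt_or_eq with hrb | rfl
    · have hmin : IsLocalMin p.eval r := by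
        filter_upwards [Ioo_mem_nhds har hrb] with x hx
        rw [hroot.eq_zero]
        exact hnonneg x (Ioo_subset_Icc_self hx)
      have := one_lt_rootMultiplicity_of_isLocalMin hp hroot hmin
      omega
    · have := (rootMultiplicity_pos hp).2 hroot
      simp only [if_true]
      omega
  have hsum := Finset.sum_le_sum hmult
  have hdeg' := p.sum_rootMultiplicity_le_natDegree F
  rw [Finset.sum_const, smul_eq_mul, Finset.sum_add_distrib, Finset.sum_ite_eq'] at hsum
  split_ifs at hsum <;> omega

end Polynomial

def momentCurve (N : ℕ) (t : ℝ) : Fin N → ℝ := fun i => t ^ ((i : ℕ) + 1)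

theorem continuous_momentCurve (N : ℕ) : Continuous (momentCurve N) :=
  continuous_pi fun _ => continuous_pow _

section MomentPoly

variable {N : ℕ} (g : (Fin N → ℝ) →ₗ[ℝ] ℝ)

noncomputable def momentPoly : ℝ[X] := ∑ i : Fin N, C (g (Pi.single i 1)) * X ^ ((i : ℕ) + 1)

theorem eval_momentPoly (t : ℝ) : (momentPoly g).eval t = g (momentCurve N t) := by
  conv_rhs => rw [← Finset.univ_sum_single (momentCurve N t)]
  simp only [momentPoly, eval_finsetSum, eval_mul, eval_C, eval_pow, eval_X, map_sum]
  refine Finset.sum_congr rfl fun i _ => ?_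
  rw [← mul_one (momentCurve N t i), ← smul_eq_mul (momentCurve N t i), Pi.single_smul',
    map_smul, smul_eq_mul, mul_comm]
  rfl

theorem coeff_momentPoly_succ (i : Fin N) :
    (momentPoly g).coeff ((i : ℕ) + 1) = g (Pi.single i 1) := by
  simp [momentPoly, coeff_C_mul, coeff_X_pow, Fin.val_eq_val]

theorem natDegree_momentPoly_le : (momentPoly g).natDegree ≤ N :=
  natDegree_sum_le_of_forall_le _ _ fun i _ => (natDegree_C_mul_X_pow_le _ _).trans i.isLt

theorem C_sub_momentPoly_ne_zero {g : (Fin N → ℝ) →ₗ[ℝ] ℝ} (hg : g ≠ 0) (c : ℝ) :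
    C c - momentPoly g ≠ 0 := by
  intro h
  refine hg (LinearMap.pi_ext' fun i => LinearMap.ext_ring ?_)
  simpa [coeff_momentPoly_succ] using congrArg (coeff · ((i : ℕ) + 1)) h

end MomentPoly

theorem exists_finset_mem_convexHull_momentCurve_of_forall_le {N m : ℕ} (hNm : N ≤ 2 * m)
    {a b : ℝ} (hab : a ≤ b) {g : (Fin N → ℝ) →ₗ[ℝ] ℝ} (hg : g ≠ 0) {y : Fin N → ℝ}
    (hy : y ∈ convexHull ℝ (momentCurve N '' Icc a b))
    (hgy : ∀ t ∈ Icc a b, g (momentCurve N t) ≤ g y) :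
    ∃ T : Finset ℝ, a ∈ T ∧ ↑T ⊆ Icc a b ∧ #T ≤ m + 1 ∧
      y ∈ convexHull ℝ (momentCurve N '' T) := by
  set q := C (g y) - momentPoly g
  have hq_eval : ∀ t, q.eval t = g y - g (momentCurve N t) := by
    simp [q, eval_momentPoly]
  have hq : q ≠ 0 := C_sub_momentPoly_ne_zero hg _
  set T := insert a {x ∈ q.roots.toFinset | x ∈ Ioc a b}
  have hroots : #{x ∈ q.roots.toFinset | x ∈ Ioc a b} ≤ m := by
    refine card_roots_Ioc_le_of_nonneg hq ?_ fun t ht => ?_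
    · exact (natDegree_sub_le _ _).trans (max_le (by simp) ((natDegree_momentPoly_le _).trans hNm))
    · rw [hq_eval, sub_nonneg]
      exact hgy t ht
  have hface : Icc a b ∩ momentCurve N ⁻¹' {x | g x = g y} ⊆ T := by
    rintro t ⟨ht, hgt⟩
    rcases eq_or_ne t a with rfl | hta
    · exact Finset.mem_insert_self _ _
    · refine Finset.mem_insert_of_mem
        (Finset.mem_filter.2 ⟨?_, lt_of_le_of_ne ht.1 hta.symm, ht.2⟩)
      have hgt : g (momentCurve N t) = g y := hgt
      simp [hq, hq_eval, hgt]
  refine ⟨T, Finset.mem_insert_self _ _, ?_, (Finset.card_insert_le _ _).trans (by omega), ?_⟩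
  · intro t ht
    rcases Finset.mem_insert.1 ht with rfl | ht
    · exact left_mem_Icc.2 hab
    · exact Ioc_subset_Icc_self (Finset.mem_filter.1 ht).2
  · have := mem_convexHull_inter_of_forall_le hy (by rintro _ ⟨t, ht, rfl⟩; exact hgy t ht)
    rw [← image_inter_preimage] at this
    exact convexHull_mono (image_mono hface) this

theorem exists_finset_mem_convexHull_momentCurve {N m : ℕ} (hNm : N ≤ 2 * m) {a b : ℝ}
    {v : Fin N → ℝ} (hv : v ∈ convexHull ℝ (momentCurve N '' Icc a b)) :
    ∃ T : Finset ℝ, a ∈ T ∧ ↑T ⊆ Icc a b ∧ #T ≤ m + 1 ∧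
      v ∈ convexHull ℝ (momentCurve N '' T) := by
  have hab : a ≤ b := by
    obtain ⟨_, t, ht, -⟩ := convexHull_nonempty_iff.1 ⟨v, hv⟩
    exact ht.1.trans ht.2
  set K := convexHull ℝ (momentCurve N '' Icc a b)
  rcases eq_or_ne (momentCurve N a) v with rfl | hav
  · exact ⟨{a}, Finset.mem_singleton_self a, by simpa using hab, by simp,
      subset_convexHull ℝ _ (by simp)⟩
  have hK : IsCompact K := isCompact_convexHull (isCompact_Icc.image (continuous_momentCurve N))
  obtain ⟨y, hy, hvy⟩ := hK.exists_mem_frontier_mem_segment hv hav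
  obtain ⟨g, hg, hgK⟩ :=
    exists_ne_zero_forall_le_of_mem_frontier (convex_convexHull ℝ _) hK.isClosed hy
  obtain ⟨T, haT, hTI, hcard, hyT⟩ := exists_finset_mem_convexHull_momentCurve_of_forall_le hNm
    hab (g := g) (by exact_mod_cast hg) (hK.isClosed.frontier_subset hy)
    fun t ht => hgK _ (subset_convexHull ℝ _ (Set.mem_image_of_mem _ ht))
  exact ⟨T, haT, hTI, hcard, (convex_convexHull ℝ _).segment_subset
    (subset_convexHull ℝ _ (Set.mem_image_of_mem _ haT)) hyT hvy⟩

/-- For even `N`, every point of the convex hull of the moment curve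
`t ↦ (t, t², …, t^N)` over `[t_min, t_max]` is a convex combination of at most
`(N+2)/2` points of the curve, one of which can be required to be at `t_min`. -/
theorem convexHull_momentCurve_even (N : ℕ) (hN : Even N)
    (tmin tmax : ℝ) (v : Fin N → ℝ)
    (hv : v ∈ convexHull ℝ ((fun t : ℝ => fun i : Fin N => t ^ ((i : ℕ) + 1)) ''
      Set.Icc tmin tmax)) :
    ∃ c t : Fin ((N + 2) / 2) → ℝ,
      (∀ j, 0 ≤ c j) ∧ (∑ j, c j = 1) ∧ (∀ j, t j ∈ Set.Icc tmin tmax) ∧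
      t ⟨0, by omega⟩ = tmin ∧
      (∀ i : Fin N, ∑ j, c j * t j ^ ((i : ℕ) + 1) = v i) := by
  obtain ⟨m, rfl⟩ := hN
  obtain ⟨T, hT, hTI, hcard, hvT⟩ :=
    exists_finset_mem_convexHull_momentCurve (m := m) (by omega) hv
  obtain ⟨c, t, hc₀, hc₁, ht, ht₀, hct⟩ :=
    exists_fin_sum_smul_eq_of_mem_convexHull_image _ hT (n := (m + m + 2) / 2) (by omega)
      (by omega) hvT
  refine ⟨c, t, hc₀, hc₁, fun j => hTI (ht j), ht₀, fun i => ?_⟩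
  simpa [momentCurve] using congrFun hct i
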